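/- arXiv:1703.03178 — 3 statements merged into one kernel-verified Lean document; each statement's English description precedes it below -/
import Mathlib

section
/- Let q ≥ 2 be a prime power, n ≥ 3 odd, m = (q^n+1)/(q+1), and let S ⊆ ℕ be the additive submonoid generated by q³, m·q, and q^n+1. Let x ∈ S with 0 < x ≤ (q−1)(q^n+1), and let j be the unique integer with (j−1)(q^n+1) < x ≤ j(q^n+1) (so 1 ≤ j ≤ q−1). Then min{ ν(y) : y ∈ S, y ≥ x } = j + 1, where ν(y) is the number of ordered pairs (a,b) ∈ S × S with a + b = y. -/
/-!
Write `N = qⁿ + 1`. Every `y ∈ S` is `a q³ + b mq + c N` with all three generators positive and at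
most `N`, so `y ≥ x > (j - 1) N` forces `a + b + c ≥ j`; moving the generators of `y` one at a
time from the second summand to the first gives `a + b + c + 1` distinct splittings, hence
`ν(y) ≥ j + 1`. The bound is attained at `y = j N ≥ x`: since `q` divides `q³` and `mq` but is
prime to `N`, reducing a splitting of `j N` modulo `q` (and using `j < q`) shows that both parts
are multiples of `N`, so the splittings are exactly `(i N, (j - i) N)` for `0 ≤ i ≤ j`.
-/

theorem AddSubmonoid.mem_closure_triple {g₁ g₂ g₃ y : ℕ} :
    y ∈ AddSubmonoid.closure {g₁, g₂, g₃} ↔ ∃ a b c, a * g₁ + b * g₂ + c * g₃ = y := by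
  simp only [Set.insert_eq g₁, closure_union, mem_sup, mem_closure_singleton, mem_closure_pair,
    smul_eq_mul]
  constructor
  · rintro ⟨_, ⟨a, rfl⟩, _, ⟨b, c, rfl⟩, rfl⟩
    exact ⟨a, b, c, by ring⟩
  · rintro ⟨a, b, c, rfl⟩
    exact ⟨_, ⟨a, rfl⟩, _, ⟨b, c, rfl⟩, by ring⟩

def addPairs (S : AddSubmonoid ℕ) (y : ℕ) : Set (ℕ × ℕ) :=
  {p | p.1 ∈ S ∧ p.2 ∈ S ∧ p.1 + p.2 = y}

section addPairs

variable {S : AddSubmonoid ℕ}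

theorem finite_addPairs (y : ℕ) : (addPairs S y).Finite :=
  ((Set.finite_Iic y).prod (Set.finite_Iic y)).subset fun _ ⟨_, _, h⟩ =>
    ⟨Set.mem_Iic.2 (by omega), Set.mem_Iic.2 (by omega)⟩

theorem ncard_addPairs_pos {y : ℕ} (hy : y ∈ S) : 0 < (addPairs S y).ncard :=
  (Set.ncard_pos (finite_addPairs y)).2 ⟨(y, 0), hy, zero_mem S, rfl⟩

/-- Shifting the second part by `s` is injective and misses the splitting `(y + s, 0)`. -/
theorem ncard_addPairs_lt_add {y s : ℕ} (hy : y ∈ S) (hs : s ∈ S) (hs0 : 0 < s) :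
    (addPairs S y).ncard < (addPairs S (y + s)).ncard := by
  let shift : ℕ × ℕ → ℕ × ℕ := fun p => (p.1, p.2 + s)
  have hinj : Function.Injective shift := fun p p' h => by
    simp only [shift, Prod.mk.injEq, add_left_inj] at h
    exact Prod.ext h.1 h.2
  have hnew : (y + s, 0) ∉ shift '' addPairs S y := by
    rintro ⟨p, -, hp⟩
    simp only [shift, Prod.mk.injEq] at hp
    omega
  have hsub : insert (y + s, 0) (shift '' addPairs S y) ⊆ addPairs S (y + s) := by
    rintro _ (rfl | ⟨p, ⟨h₁, h₂, h⟩, rfl⟩)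
    · exact ⟨add_mem hy hs, zero_mem S, rfl⟩
    · exact ⟨h₁, add_mem h₂ hs, by simp only [shift]; omega⟩
  calc (addPairs S y).ncard
      < (insert (y + s, 0) (shift '' addPairs S y)).ncard := by
        rw [Set.ncard_insert_of_notMem hnew ((finite_addPairs y).image shift),
          Set.ncard_image_of_injective _ hinj]
        exact Nat.lt_succ_self _
    _ ≤ (addPairs S (y + s)).ncard := Set.ncard_le_ncard hsub (finite_addPairs _)

theorem ncard_addPairs_add_le {y s : ℕ} (hy : y ∈ S) (hs : s ∈ S) (hs0 : 0 < s) (k : ℕ) :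
    (addPairs S y).ncard + k ≤ (addPairs S (y + k * s)).ncard := by
  induction k with
  | zero => simp
  | succ k ih =>
    have hlt := ncard_addPairs_lt_add (add_mem hy (nsmul_mem hs k)) hs hs0
    rw [smul_eq_mul] at hlt
    rw [add_mul, one_mul, ← add_assoc y]
    omega

theorem add_one_le_ncard_addPairs {g₁ g₂ g₃ : ℕ} (h₁ : g₁ ∈ S) (h₂ : g₂ ∈ S) (h₃ : g₃ ∈ S)
    (hg₁ : 0 < g₁) (hg₂ : 0 < g₂) (hg₃ : 0 < g₃) (a b c : ℕ) :
    a + b + c + 1 ≤ (addPairs S (a * g₁ + b * g₂ + c * g₃)).ncard := by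
  have hmul {g : ℕ} (hg : g ∈ S) (k : ℕ) : k * g ∈ S := nsmul_mem hg k
  have h0 := ncard_addPairs_pos (zero_mem S)
  have ha := ncard_addPairs_add_le (zero_mem S) h₁ hg₁ a
  have hb := ncard_addPairs_add_le (hmul h₁ a) h₂ hg₂ b
  have hc := ncard_addPairs_add_le (add_mem (hmul h₁ a) (hmul h₂ b)) h₃ hg₃ c
  rw [zero_add] at ha
  omega

end addPairs

theorem eq_zero_of_mul_add_mul_add_mul_eq {q g₁ g₂ N A B C j : ℕ} (h₁ : q ∣ g₁) (h₂ : q ∣ g₂)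
    (hN : N.Coprime q) (hg₁ : 0 < g₁) (hg₂ : 0 < g₂) (hN0 : 0 < N) (hj : j < q)
    (h : A * g₁ + B * g₂ + C * N = j * N) : A = 0 ∧ B = 0 ∧ C = j := by
  have hC : C ≤ j := Nat.le_of_mul_le_mul_right (by omega) hN0
  have hrest : A * g₁ + B * g₂ = (j - C) * N := by rw [Nat.sub_mul]; omega
  have hdvd : q ∣ (j - C) * N :=
    hrest ▸ dvd_add (dvd_mul_of_dvd_right h₁ A) (dvd_mul_of_dvd_right h₂ B)
  have hjC : j - C = 0 :=
    Nat.eq_zero_of_dvd_of_lt (hN.symm.dvd_of_dvd_mul_right hdvd) (by omega)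
  rw [hjC, zero_mul, Nat.add_eq_zero_iff, Nat.mul_eq_zero, Nat.mul_eq_zero] at hrest
  omega

section closure

variable {g₁ g₂ g₃ N : ℕ}

theorem le_ncard_addPairs_of_mul_lt {j y : ℕ} (hg₁ : 0 < g₁) (hg₂ : 0 < g₂) (hg₃ : 0 < g₃)
    (hg₁N : g₁ ≤ N) (hg₂N : g₂ ≤ N) (hg₃N : g₃ ≤ N) (hy : y ∈ AddSubmonoid.closure {g₁, g₂, g₃})
    (hjy : (j - 1) * N < y) : j + 1 ≤ (addPairs (AddSubmonoid.closure {g₁, g₂, g₃}) y).ncard := by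
  obtain ⟨a, b, c, rfl⟩ := AddSubmonoid.mem_closure_triple.1 hy
  have hle : a * g₁ + b * g₂ + c * g₃ ≤ (a + b + c) * N := by
    rw [add_mul, add_mul]
    gcongr
  have hj : j - 1 < a + b + c := Nat.lt_of_mul_lt_mul_right (hjy.trans_le hle)
  have hmem {g : ℕ} (hg : g = g₁ ∨ g = g₂ ∨ g = g₃) : g ∈ AddSubmonoid.closure {g₁, g₂, g₃} :=
    AddSubmonoid.subset_closure hg
  have := add_one_le_ncard_addPairs (hmem (.inl rfl)) (hmem (.inr (.inl rfl)))
    (hmem (.inr (.inr rfl))) hg₁ hg₂ hg₃ a b c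
  omega

theorem addPairs_mul_eq_image {q j : ℕ} (h₁ : q ∣ g₁) (h₂ : q ∣ g₂) (hN : N.Coprime q)
    (hg₁ : 0 < g₁) (hg₂ : 0 < g₂) (hN0 : 0 < N) (hj : j < q) :
    addPairs (AddSubmonoid.closure {g₁, g₂, N}) (j * N) =
      (fun p : ℕ × ℕ => (p.1 * N, p.2 * N)) '' ↑(Finset.HasAntidiagonal.antidiagonal j) := by
  ext ⟨a, b⟩
  constructor
  · rintro ⟨ha, hb, hab⟩
    obtain ⟨α, β, γ, rfl⟩ := AddSubmonoid.mem_closure_triple.1 ha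
    obtain ⟨α', β', γ', rfl⟩ := AddSubmonoid.mem_closure_triple.1 hb
    obtain ⟨hA, hB, hC⟩ := eq_zero_of_mul_add_mul_add_mul_eq (A := α + α') (B := β + β')
      (C := γ + γ') h₁ h₂ hN hg₁ hg₂ hN0 hj (by rw [← hab]; ring)
    obtain ⟨rfl, rfl, rfl, rfl⟩ : α = 0 ∧ α' = 0 ∧ β = 0 ∧ β' = 0 := by omega
    exact ⟨(γ, γ'), Finset.HasAntidiagonal.mem_antidiagonal.2 hC, by simp⟩
  · rintro ⟨⟨c, d⟩, hcd, hp⟩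
    obtain ⟨rfl, rfl⟩ := Prod.mk.inj hp
    exact ⟨AddSubmonoid.mem_closure_triple.2 ⟨0, 0, c, by ring⟩,
      AddSubmonoid.mem_closure_triple.2 ⟨0, 0, d, by ring⟩,
      by rw [← add_mul, Finset.HasAntidiagonal.mem_antidiagonal.1 hcd]⟩

theorem ncard_addPairs_mul {q j : ℕ} (h₁ : q ∣ g₁) (h₂ : q ∣ g₂) (hN : N.Coprime q)
    (hg₁ : 0 < g₁) (hg₂ : 0 < g₂) (hN0 : 0 < N) (hj : j < q) :
    (addPairs (AddSubmonoid.closure {g₁, g₂, N}) (j * N)).ncard = j + 1 := by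
  have hinj : Function.Injective fun p : ℕ × ℕ => (p.1 * N, p.2 * N) := fun p p' h => by
    obtain ⟨h, h'⟩ := Prod.mk.inj h
    exact Prod.ext (Nat.eq_of_mul_eq_mul_right hN0 h) (Nat.eq_of_mul_eq_mul_right hN0 h')
  rw [addPairs_mul_eq_image h₁ h₂ hN hg₁ hg₂ hN0 hj, Set.ncard_image_of_injective _ hinj,
    Set.ncard_coe_finset, Finset.Nat.card_antidiagonal]

end closure

theorem stmt_16_general (q n m : ℕ) (hn : 3 ≤ n) (hm : m * (q + 1) = q ^ n + 1)
    (S : AddSubmonoid ℕ)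
    (hS : S = AddSubmonoid.closure {q ^ 3, m * q, q ^ n + 1})
    (ν : ℕ → ℕ)
    (hν : ∀ x, ν x = {p : ℕ × ℕ | p.1 ∈ S ∧ p.2 ∈ S ∧ p.1 + p.2 = x}.ncard)
    (x j : ℕ) (hxu : x ≤ (q - 1) * (q ^ n + 1))
    (hj1 : (j - 1) * (q ^ n + 1) < x) (hj2 : x ≤ j * (q ^ n + 1)) :
    sInf (ν '' {y : ℕ | y ∈ S ∧ x ≤ y}) = j + 1 := by
  obtain rfl : ν = fun y => (addPairs S y).ncard := funext hν
  subst hS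
  have hjq : j < q := by
    have : j - 1 < q - 1 := Nat.lt_of_mul_lt_mul_right (hj1.trans_le hxu)
    omega
  have hq : 0 < q := by omega
  have hm0 : 0 < m := Nat.pos_of_ne_zero (by rintro rfl; simp at hm)
  have hg₁N : q ^ 3 ≤ q ^ n + 1 := (Nat.pow_le_pow_right hq hn).trans (Nat.le_succ _)
  have hg₂N : m * q ≤ q ^ n + 1 := hm ▸ Nat.mul_le_mul_left m (Nat.le_succ q)
  have hcop : (q ^ n + 1).Coprime q := by
    rw [add_comm, ← Nat.sub_add_cancel (by omega : 1 ≤ n), pow_succ,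
      Nat.coprime_add_mul_right_left]
    exact Nat.coprime_one_left q
  refine IsLeast.csInf_eq ⟨⟨j * (q ^ n + 1), ⟨?_, hj2⟩, ?_⟩, ?_⟩
  · exact AddSubmonoid.mem_closure_triple.2 ⟨0, 0, j, by ring⟩
  · exact ncard_addPairs_mul (dvd_pow_self q (by norm_num)) (dvd_mul_left q m) hcop
      (by positivity) (by positivity) (by positivity) hjq
  · rintro _ ⟨y, ⟨hy, hxy⟩, rfl⟩
    exact le_ncard_addPairs_of_mul_lt (by positivity) (by positivity) (by positivity) hg₁N hg₂N
      le_rfl hy (hj1.trans_le hxy)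

/-- The order bound for small elements of the telescopic semigroup
`S = ⟨q³, mq, qⁿ+1⟩`: if `x ∈ S` with `(j-1)(qⁿ+1) < x ≤ j(qⁿ+1)` and
`0 < x ≤ (q-1)(qⁿ+1)`, then `min{ν(y) : y ∈ S, y ≥ x} = j + 1`. -/
theorem stmt_16 (q n m : ℕ) (hq : IsPrimePow q) (hq2 : 2 ≤ q) (hn : 3 ≤ n)
    (hodd : Odd n) (hm : m * (q + 1) = q ^ n + 1)
    (S : AddSubmonoid ℕ)
    (hS : S = AddSubmonoid.closure {q ^ 3, m * q, q ^ n + 1})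
    (ν : ℕ → ℕ)
    (hν : ∀ x, ν x = {p : ℕ × ℕ | p.1 ∈ S ∧ p.2 ∈ S ∧ p.1 + p.2 = x}.ncard)
    (x j : ℕ) (hx : x ∈ S) (hx0 : 0 < x) (hxu : x ≤ (q - 1) * (q ^ n + 1))
    (hj1 : (j - 1) * (q ^ n + 1) < x) (hj2 : x ≤ j * (q ^ n + 1)) :
    sInf (ν '' {y : ℕ | y ∈ S ∧ x ≤ y}) = j + 1 :=
  stmt_16_general q n m hn hm S hS ν hν x j hxu hj1 hj2
end

section
/- Let q ≥ 2 be a prime power, n ≥ 3 odd, m = (q^n+1)/(q+1), S ⊆ ℕ the additive submonoid generated by q³, m·q, q^n+1, and g = (q−1)(q^{n+1}+q^n−q²)/2. Enumerate S = {ρ₁ = 0 < ρ₂ < ρ₃ < …}. If ℓ is an integer with (3/2)(q−1)(q^{n+1} + q^n/3 − q² − 2/3) − 2 < ℓ ≤ (3/2)(q−1)(q^{n+1} + q^n − q²) − 2, then min{ ν(y) : y ∈ S, y ≥ ρ_{ℓ+1} } = min{ z ∈ S : z ≥ ℓ + 1 − g }, where ν(y) is the number of ordered pairs (a,b) ∈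 S × S with a + b = y. -/
/-!
Since `qⁿ + 1 = m(q + 1)`, the semigroup is `S = ⟨q³, mq, m(q+1)⟩`. Because `gcd(q, m) = 1`, the
`q³` elements `d·mq + e·m(q+1)` with `d < q²`, `e < q` are pairwise incongruent modulo `q³`, so
they form the Apéry set of `S` with respect to `q³`. It has a unique maximum `w`, and `w - a` is
again an Apéry element for every Apéry element `a`; hence `S` is symmetric with Frobenius number
`F = w - q³ = 2g - 1`.

In a symmetric semigroup `ρ_{ℓ+1} = F + k` with `k = ℓ + 1 - g` (for `ℓ ≥ g`), and
`ν(F + t) = t + #{x ≤ F : x ∈ S, x + t ∉ S}`, so `ν(F + z) = z` for `z ∈ S`. The order bound is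
therefore `min{z ∈ S : z ≥ k}` once every `ν(F + t)` with `t ≥ k`, `t ∉ S` is at least some
element of `S` above `t`. The lower bound on `ℓ` says exactly that `F - t < (q² - 1)m`, which
forces `F - t = cq³ + d·mq + e·m(q+1)` with `d + e < q`. Then the `e + 1` elements
`d·mq + i·m(q+1)`, `i ≤ e`, are counted in `ν(F + t)`, while `t + e + 1 ∈ S`: the congruence
`m(q + 1) ≡ 1 (mod q³)` rules out `F - t - (e + 1) ∈ S`.
-/

open Finset

namespace NumericalSemigroup

structure IsSymmetric (S : AddSubmonoid ℕ) (F : ℕ) : Prop where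
  mem_of_lt : ∀ x, F < x → x ∈ S
  mem_iff_sub_notMem : ∀ x ≤ F, x ∈ S ↔ F - x ∉ S

noncomputable def pairCount (S : AddSubmonoid ℕ) (y : ℕ) : ℕ :=
  {p : ℕ × ℕ | p.1 ∈ S ∧ p.2 ∈ S ∧ p.1 + p.2 = y}.ncard

variable {S : AddSubmonoid ℕ} {F : ℕ}

open Classical in
lemma pairCount_eq_sum (y : ℕ) :
    (pairCount S y : ℤ) =
      ∑ a ∈ range (y + 1), (if a ∈ S then 1 else 0) * (if y - a ∈ S then 1 else 0) := by
  have : {p : ℕ × ℕ | p.1 ∈ S ∧ p.2 ∈ S ∧ p.1 + p.2 = y} =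
      ↑{p ∈ antidiagonal y | p.1 ∈ S ∧ p.2 ∈ S} := by
    ext p
    simp only [coe_filter, HasAntidiagonal.mem_antidiagonal, Set.mem_ofPred_eq]
    tauto
  rw [pairCount, this, Set.ncard_coe_finset, natCast_card_filter,
    Nat.sum_antidiagonal_eq_sum_range_succ_mk]
  simp_rw [ite_zero_mul_ite_zero, one_mul]

lemma IsSymmetric.notMem_iff_sub_mem (h : IsSymmetric S F) {x : ℕ} (hx : x ≤ F) :
    x ∉ S ↔ F - x ∈ S := by
  rw [h.mem_iff_sub_notMem x hx, not_not]

open Classical in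
lemma IsSymmetric.ite_sub (h : IsSymmetric S F) {x : ℕ} (hx : x ≤ F) :
    (if F - x ∈ S then 1 else 0 : ℤ) = 1 - if x ∈ S then 1 else 0 := by
  by_cases hxS : x ∈ S
  · simp [hxS, (h.mem_iff_sub_notMem x hx).1 hxS]
  · simp [hxS, (h.notMem_iff_sub_mem hx).1 hxS]

open Classical in
theorem IsSymmetric.pairCount_add (h : IsSymmetric S F) (t : ℕ) :
    pairCount S (F + t) = t + #{x ∈ range (F + 1) | x ∈ S ∧ x + t ∉ S} := by
  set χ : ℕ → ℤ := fun x => if x ∈ S then 1 else 0 with hχ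
  have hlarge : ∀ x, F < x → χ x = 1 := fun x hx => if_pos (h.mem_of_lt x hx)
  have hrefl : ∀ x ≤ F, χ (F - x) = 1 - χ x := fun x hx => h.ite_sub hx
  have hcount : ∑ a ∈ range t, χ a + ∑ x ∈ range (F + 1), χ (t + x) =
      ∑ x ∈ range (F + 1), χ x + t := by
    rw [← sum_range_add, add_comm t, sum_range_add,
      sum_congr rfl fun x _ => hlarge (F + 1 + x) (by omega)]
    simp
  have hpairs : (pairCount S (F + t) : ℤ) =
      ∑ a ∈ range t, χ a + ∑ x ∈ range (F + 1), χ (t + x) * (1 - χ x) := by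
    rw [pairCount_eq_sum, show F + t + 1 = t + (F + 1) by ring, sum_range_add]
    change ∑ a ∈ range t, χ a * χ (F + t - a) +
      ∑ x ∈ range (F + 1), χ (t + x) * χ (F + t - (t + x)) = _
    congr 1
    · exact sum_congr rfl fun a ha => by
        rw [hlarge (F + t - a) (by simp at ha; omega), mul_one]
    · exact sum_congr rfl fun x hx => by
        rw [show F + t - (t + x) = F - x by omega, ← hrefl x (by simp at hx; omega)]
  have hfilter : (#{x ∈ range (F + 1) | x ∈ S ∧ x + t ∉ S} : ℤ) =
      ∑ x ∈ range (F + 1), χ x * (1 - χ (t + x)) := by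
    rw [natCast_card_filter]
    refine sum_congr rfl fun x _ => ?_
    rw [add_comm t]
    by_cases hx : x ∈ S <;> by_cases hxt : x + t ∈ S <;> simp [hχ, hx, hxt]
  have hdiff : ∑ x ∈ range (F + 1), χ (t + x) * (1 - χ x) -
      ∑ x ∈ range (F + 1), χ x * (1 - χ (t + x)) =
      ∑ x ∈ range (F + 1), χ (t + x) - ∑ x ∈ range (F + 1), χ x := by
    rw [← sum_sub_distrib, ← sum_sub_distrib]
    exact sum_congr rfl fun x _ => by ring
  zify
  linear_combination hpairs - hfilter + hcount + hdiff

lemma IsSymmetric.pairCount_add_of_mem (h : IsSymmetric S F) {t : ℕ} (ht : t ∈ S) :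
    pairCount S (F + t) = t := by
  classical
  rw [h.pairCount_add, add_eq_left, card_eq_zero, filter_eq_empty_iff]
  exact fun x _ hx => hx.2 (S.add_mem hx.1 ht)

lemma IsSymmetric.le_pairCount_add (h : IsSymmetric S F) (t : ℕ) : t ≤ pairCount S (F + t) := by
  classical
  rw [h.pairCount_add]
  exact Nat.le_add_right _ _

open Classical in
lemma IsSymmetric.two_mul_count (h : IsSymmetric S F) :
    2 * Nat.count (· ∈ S) (F + 1) = F + 1 := by
  set χ : ℕ → ℤ := fun x => if x ∈ S then 1 else 0
  have hrefl : ∀ x ≤ F, χ (F - x) = 1 - χ x := fun x hx => h.ite_sub hx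
  have hsum := sum_range_reflect χ (F + 1)
  rw [sum_congr rfl fun x hx => by
    rw [show F + 1 - 1 - x = F - x by omega, hrefl x (by simp at hx; omega)]] at hsum
  rw [Nat.count_eq_card_filter_range]
  zify
  rw [natCast_card_filter]
  simp only [sum_sub_distrib, sum_const, card_range, nsmul_eq_mul, mul_one] at hsum
  push_cast at hsum ⊢
  linear_combination -hsum

lemma IsSymmetric.nth_eq (h : IsSymmetric S F) {g ℓ : ℕ} (hg : F + 1 = 2 * g) (hℓ : g ≤ ℓ) :
    Nat.nth (· ∈ S) ℓ = ℓ + g := by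
  classical
  have hcount : Nat.count (· ∈ S) (ℓ + g) = ℓ := by
    rw [show ℓ + g = F + 1 + (ℓ - g) by omega, Nat.count_add,
      Nat.count_of_forall (p := fun x => F + 1 + x ∈ S) fun x _ => h.mem_of_lt _ (by omega)]
    have := h.two_mul_count
    omega
  simpa [hcount] using Nat.nth_count (p := (· ∈ S)) (h.mem_of_lt (ℓ + g) (by omega))

theorem IsSymmetric.sInf_pairCount_image (h : IsSymmetric S F) {k : ℕ} (hk : 0 < k)
    (hle : ∀ t, k ≤ t → ∃ z ∈ S, k ≤ z ∧ z ≤ pairCount S (F + t)) :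
    sInf (pairCount S '' {y | y ∈ S ∧ F + k ≤ y}) = sInf {z | z ∈ S ∧ k ≤ z} := by
  set z₀ := sInf {z | z ∈ S ∧ k ≤ z}
  obtain ⟨hz₀S, hkz₀⟩ : z₀ ∈ S ∧ k ≤ z₀ :=
    Nat.sInf_mem (s := {z | z ∈ S ∧ k ≤ z}) ⟨F + 1 + k, h.mem_of_lt _ (by omega), by omega⟩
  have hz₀ : z₀ ∈ pairCount S '' {y | y ∈ S ∧ F + k ≤ y} :=
    ⟨F + z₀, ⟨h.mem_of_lt _ (by omega), by omega⟩, h.pairCount_add_of_mem hz₀S⟩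
  refine le_antisymm (Nat.sInf_le hz₀) (le_csInf ⟨z₀, hz₀⟩ ?_)
  rintro _ ⟨y, ⟨-, hy⟩, rfl⟩
  obtain ⟨z, hzS, hkz, hz⟩ := hle (y - F) (by omega)
  rw [show F + (y - F) = y by omega] at hz
  exact (Nat.sInf_le (show z ∈ {z | z ∈ S ∧ k ≤ z} from ⟨hzS, hkz⟩)).trans hz

end NumericalSemigroup

namespace GGS

open NumericalSemigroup

variable {q m : ℕ}

def semigroup (q m : ℕ) : AddSubmonoid ℕ := AddSubmonoid.closure {q ^ 3, m * q, m * (q + 1)}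

lemma mem_semigroup {x : ℕ} :
    x ∈ semigroup q m ↔ ∃ c d e : ℕ, c * q ^ 3 + d * (m * q) + e * (m * (q + 1)) = x := by
  rw [semigroup, ← Set.singleton_union, AddSubmonoid.closure_union, AddSubmonoid.mem_sup]
  simp only [AddSubmonoid.mem_closure_singleton, AddSubmonoid.mem_closure_pair, smul_eq_mul]
  constructor
  · rintro ⟨_, ⟨c, rfl⟩, _, ⟨d, e, rfl⟩, rfl⟩
    exact ⟨c, d, e, by ring⟩
  · rintro ⟨c, d, e, rfl⟩
    exact ⟨_, ⟨c, rfl⟩, _, ⟨d, e, rfl⟩, by ring⟩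

lemma exists_reduced_rep (hq : 0 < q) (d e : ℕ) :
    ∃ c d' e', d' < q ^ 2 ∧ e' < q ∧
      d * (m * q) + e * (m * (q + 1)) = c * q ^ 3 + d' * (m * q) + e' * (m * (q + 1)) := by
  obtain ⟨a, r, hr, rfl⟩ : ∃ a r, r < q ∧ e = q * a + r :=
    ⟨e / q, e % q, Nat.mod_lt _ hq, (Nat.div_add_mod e q).symm⟩
  obtain ⟨A, R, hR, hAR⟩ : ∃ A R, R < q ^ 2 ∧ d + (q + 1) * a = q ^ 2 * A + R :=
    ⟨_, _, Nat.mod_lt _ (by positivity), (Nat.div_add_mod _ _).symm⟩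
  refine ⟨m * A, R, r, hR, hr, ?_⟩
  -- `q` copies of `m(q+1)` are `q+1` copies of `mq`, and `q²` copies of `mq` are `m` copies of `q³`
  have := congrArg (· * (m * q)) hAR
  linarith

lemma apery_unique (hqm : q.Coprime m) {d d' e e' : ℕ} (hd : d < q ^ 2) (hd' : d' < q ^ 2)
    (he : e < q) (he' : e' < q)
    (h : d * (m * q) + e * (m * (q + 1)) ≡ d' * (m * q) + e' * (m * (q + 1)) [MOD q ^ 3]) :
    d = d' ∧ e = e' := by
  have hq : (0 : ℤ) < q := by
    have : q ≠ 0 := by rintro rfl; simp at hd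
    positivity
  have hcop : IsCoprime ((q : ℤ) ^ 3) m := (Nat.isCoprime_iff_coprime.2 hqm).pow_left
  have hdvd : (q : ℤ) ^ 3 ∣ q * ((d' - d : ℤ) + (e' - e)) + (e' - e) := by
    refine hcop.dvd_of_dvd_mul_left ?_
    have := Nat.modEq_iff_dvd.1 h
    push_cast at this
    rwa [show ((d' : ℤ) * (m * q) + e' * (m * (q + 1)) - (d * (m * q) + e * (m * (q + 1)))) =
      m * (q * ((d' - d : ℤ) + (e' - e)) + (e' - e)) by ring] at this
  have he_eq : (e' - e : ℤ) = 0 := by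
    have : (q : ℤ) ∣ e' - e := by
      have := (dvd_pow_self (q : ℤ) three_ne_zero).trans hdvd
      exact (dvd_add_right (dvd_mul_right _ _)).1 this
    exact Int.eq_zero_of_abs_lt_dvd this (by rw [abs_lt]; constructor <;> omega)
  have hd_eq : (d' - d : ℤ) = 0 := by
    have : (q : ℤ) ^ 2 ∣ d' - d := by
      rw [he_eq, add_zero, add_zero, pow_succ'] at hdvd
      exact (mul_dvd_mul_iff_left hq.ne').1 hdvd
    have : (d : ℤ) < q ^ 2 := by exact_mod_cast hd
    have : (d' : ℤ) < q ^ 2 := by exact_mod_cast hd'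
    exact Int.eq_zero_of_abs_lt_dvd ‹_› (by rw [abs_lt]; constructor <;> omega)
  omega

lemma exists_apery_modEq (hqm : q.Coprime m) (hq : 0 < q) (x : ℕ) :
    ∃ d < q ^ 2, ∃ e < q, d * (m * q) + e * (m * (q + 1)) ≡ x [MOD q ^ 3] := by
  set w : ℕ × ℕ → ℕ := fun p => (p.1 * (m * q) + p.2 * (m * (q + 1))) % q ^ 3
  have hinj : Set.InjOn w (range (q ^ 2) ×ˢ range q : Finset (ℕ × ℕ)) := by
    rintro ⟨d, e⟩ hde ⟨d', e'⟩ hde' h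
    simp only [coe_product, coe_range, Set.mem_prod, Set.mem_Iio] at hde hde'
    obtain ⟨rfl, rfl⟩ := apery_unique hqm hde.1 hde'.1 hde.2 hde'.2 h
    rfl
  -- pigeonhole: `q² · q` pairwise incongruent elements meet every residue class modulo `q³`
  have himage : (range (q ^ 2) ×ˢ range q).image w = range (q ^ 3) := by
    refine eq_of_subset_of_card_le (fun y hy => ?_) ?_
    · obtain ⟨p, -, rfl⟩ := mem_image.1 hy
      exact mem_range.2 (Nat.mod_lt _ (by positivity))
    · rw [card_image_of_injOn hinj, card_product, card_range, card_range, card_range, ← pow_succ]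
  obtain ⟨⟨d, e⟩, hde, hw⟩ :=
    mem_image.1 (himage ▸ mem_range.2 (Nat.mod_lt x (by positivity)) : x % q ^ 3 ∈ _)
  rw [mem_product, mem_range, mem_range] at hde
  exact ⟨d, hde.1, e, hde.2, hw⟩

lemma exists_add_eq_apery_of_notMem (hqm : q.Coprime m) (hq : 0 < q) {x : ℕ}
    (hx : x ∉ semigroup q m) :
    ∃ d < q ^ 2, ∃ e < q, ∃ j, 0 < j ∧ x + j * q ^ 3 = d * (m * q) + e * (m * (q + 1)) := by
  obtain ⟨d, hd, e, he, hde⟩ := exists_apery_modEq hqm hq x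
  have hlt : x < d * (m * q) + e * (m * (q + 1)) := by
    by_contra! hle
    obtain ⟨c, hc⟩ := (Nat.modEq_iff_dvd' hle).1 hde
    exact hx (mem_semigroup.2 ⟨c, d, e, by rw [mul_comm c, ← hc]; omega⟩)
  obtain ⟨j, hj⟩ := (Nat.modEq_iff_dvd' hlt.le).1 hde.symm
  refine ⟨d, hd, e, he, j, Nat.pos_of_ne_zero ?_, by rw [mul_comm j, ← hj]; omega⟩
  rintro rfl
  omega

theorem isSymmetric_semigroup (hqm : q.Coprime m) (hq : 0 < q) {F : ℕ}
    (hF : F + q ^ 3 = (q ^ 2 - 1) * (m * q) + (q - 1) * (m * (q + 1))) :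
    IsSymmetric (semigroup q m) F := by
  have hq2 : 0 < q ^ 2 := by positivity
  have hF_notMem : F ∉ semigroup q m := by
    intro hFS
    obtain ⟨c, d, e, rfl⟩ := mem_semigroup.1 hFS
    obtain ⟨c', d', e', hd', he', hred⟩ := exists_reduced_rep (m := m) hq d e
    have hmod : d' * (m * q) + e' * (m * (q + 1)) ≡
        (q ^ 2 - 1) * (m * q) + (q - 1) * (m * (q + 1)) [MOD q ^ 3] := by
      have : c * q ^ 3 + d * (m * q) + e * (m * (q + 1)) + q ^ 3 =
          d' * (m * q) + e' * (m * (q + 1)) + (c + c' + 1) * q ^ 3 := by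
        linarith
      rw [← hF, this]
      exact (Nat.add_mul_mod_self_right _ _ _).symm
    obtain ⟨rfl, rfl⟩ := apery_unique hqm hd' (by omega) he' (by omega) hmod
    have : 0 < q ^ 3 := by positivity
    omega
  refine ⟨fun x hx => ?_, fun x hx => ⟨fun hxS hFx => hF_notMem ?_, fun hFx => ?_⟩⟩
  · by_contra hxS
    obtain ⟨d, hd, e, he, j, hj, hxj⟩ := exists_add_eq_apery_of_notMem hqm hq hxS
    have : d * (m * q) ≤ (q ^ 2 - 1) * (m * q) := Nat.mul_le_mul_right _ (by omega)
    have : e * (m * (q + 1)) ≤ (q - 1) * (m * (q + 1)) := Nat.mul_le_mul_right _ (by omega)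
    have : q ^ 3 ≤ j * q ^ 3 := Nat.le_mul_of_pos_left _ hj
    omega
  · simpa [Nat.add_sub_cancel' hx] using add_mem hxS hFx
  · by_contra hxS
    obtain ⟨d, hd, e, he, j, hj, hxj⟩ := exists_add_eq_apery_of_notMem hqm hq hxS
    obtain ⟨j, rfl⟩ : ∃ j', j = j' + 1 := ⟨j - 1, by omega⟩
    obtain ⟨d', hd'⟩ : ∃ d', q ^ 2 - 1 = d + d' := ⟨q ^ 2 - 1 - d, by omega⟩
    obtain ⟨e', he'⟩ : ∃ e', q - 1 = e + e' := ⟨q - 1 - e, by omega⟩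
    rw [hd', he'] at hF
    refine hFx (mem_semigroup.2 ⟨j, d', e', ?_⟩)
    have : j * q ^ 3 + d' * (m * q) + e' * (m * (q + 1)) + x = F := by linarith
    omega

lemma coprime_of_mul_succ_eq {k : ℕ} (hm : m * (q + 1) = q ^ 3 * k + 1) : q.Coprime m := by
  have : q.Coprime (m * (q + 1)) := by
    rw [hm, show q ^ 3 * k = q * (q ^ 2 * k) by ring, Nat.coprime_mul_left_add_right]
    exact Nat.coprime_one_right q
  exact this.coprime_mul_right_right

lemma apery_ne_add_succ (hq : 2 ≤ q) {k : ℕ} (hm : m * (q + 1) = q ^ 3 * k + 1)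
    {c c' d d' e e' : ℕ} (h : d + e < q) (h' : d' + e' < q) :
    c * q ^ 3 + d * (m * q) + e * (m * (q + 1)) ≠
      c' * q ^ 3 + d' * (m * q) + e' * (m * (q + 1)) + (e + 1) := by
  intro heq
  have heqZ : (c * q ^ 3 + d * (m * q) + e * (m * (q + 1)) : ℤ) =
      c' * q ^ 3 + d' * (m * q) + e' * (m * (q + 1)) + (e + 1) := by exact_mod_cast heq
  have hmZ : (m * (q + 1) : ℤ) = q ^ 3 * k + 1 := by exact_mod_cast hm
  have hqZ : (2 : ℤ) ≤ q := by exact_mod_cast hq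
  have hZ : (d + e : ℤ) < q := by exact_mod_cast h
  have hZ' : (d' + e' : ℤ) < q := by exact_mod_cast h'
  -- multiplying by `q + 1`, the inverse of `m` modulo `q³`, strips off the factor `m`
  set L : ℤ := d * q + e * (q + 1)
  set L' : ℤ := d' * q + e' * (q + 1)
  have hdvd : (q : ℤ) ^ 3 ∣ L - L' - (e + 1) * (q + 1) :=
    ⟨(q + 1) * (c' - c) + k * (L' - L),
      by linear_combination (q + 1 : ℤ) * heqZ - (L - L') * hmZ⟩
  have hL : L ≤ q ^ 2 - 1 := by nlinarith
  have hL' : 0 ≤ L' := by positivity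
  have hL'' : L' ≤ q ^ 2 - 1 := by nlinarith
  have hzero : L - L' - (e + 1) * (q + 1) = 0 := by
    refine Int.eq_zero_of_abs_lt_dvd hdvd (abs_lt.2 ⟨?_, ?_⟩) <;> nlinarith
  have hdq : (d : ℤ) * q = (d' + e' + 1) * q + (e' + 1) := by linear_combination hzero
  rcases le_or_gt (d : ℤ) (d' + e' + 1) with hle | hlt
  · nlinarith
  · nlinarith

lemma exists_rep_of_lt {u : ℕ} (hu : u ∈ semigroup q m) (hlt : u < (q ^ 2 - 1) * m) :
    ∃ c d e, d + e < q ∧ c * q ^ 3 + d * (m * q) + e * (m * (q + 1)) = u := by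
  obtain ⟨c, d, e, rfl⟩ := mem_semigroup.1 hu
  refine ⟨c, d, e, ?_, rfl⟩
  by_contra! hqde
  have : q * (m * q) ≤ (d + e) * (m * q) := Nat.mul_le_mul_right _ hqde
  have : e * (m * q) ≤ e * (m * (q + 1)) := Nat.mul_le_mul_left _ (by ring_nf; omega)
  have : (q ^ 2 - 1) * m ≤ q * (m * q) := by
    rw [show q * (m * q) = q ^ 2 * m by ring]
    exact Nat.mul_le_mul_right _ (Nat.sub_le _ _)
  linarith [Nat.zero_le (c * q ^ 3)]

lemma sub_succ_notMem (hq : 2 ≤ q) {k : ℕ} (hm : m * (q + 1) = q ^ 3 * k + 1) {c d e v : ℕ}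
    (hde : d + e < q) (hv : v + (e + 1) = c * q ^ 3 + d * (m * q) + e * (m * (q + 1)))
    (hlt : v < (q ^ 2 - 1) * m) : v ∉ semigroup q m := by
  intro hvS
  obtain ⟨c', d', e', h', rfl⟩ := exists_rep_of_lt hvS hlt
  exact apery_ne_add_succ hq hm hde h' hv.symm

open Classical in
lemma succ_le_card_filter {F c d e t : ℕ} (h : IsSymmetric (semigroup q m) F) (hm : 0 < m)
    (hu : c * q ^ 3 + d * (m * q) + e * (m * (q + 1)) + t = F) :
    e + 1 ≤ #{x ∈ range (F + 1) | x ∈ semigroup q m ∧ x + t ∉ semigroup q m} := by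
  set f : ℕ → ℕ := fun i => d * (m * q) + i * (m * (q + 1))
  have hinj : Function.Injective f := fun i j hij =>
    Nat.eq_of_mul_eq_mul_right (by positivity) (Nat.add_left_cancel hij)
  calc e + 1 = #((range (e + 1)).image f) := by rw [card_image_of_injective _ hinj, card_range]
    _ ≤ _ := card_le_card fun x hx => ?_
  obtain ⟨i, hi, rfl⟩ := mem_image.1 hx
  obtain ⟨j, rfl⟩ : ∃ j, e = i + j := ⟨e - i, by rw [mem_range] at hi; omega⟩
  have hsplit : f i + t + (c * q ^ 3 + 0 * (m * q) + j * (m * (q + 1))) = F := by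
    simp only [f]
    linarith
  have hcompl : c * q ^ 3 + 0 * (m * q) + j * (m * (q + 1)) = F - (f i + t) := by omega
  refine mem_filter.2 ⟨mem_range.2 (by omega), mem_semigroup.2 ⟨0, d, i, by simp [f]⟩, ?_⟩
  exact fun hmem =>
    (h.mem_iff_sub_notMem _ (by omega)).1 hmem (mem_semigroup.2 ⟨_, _, _, hcompl⟩)

theorem exists_mem_le_pairCount (hq : 2 ≤ q) {k F t : ℕ} (hm : m * (q + 1) = q ^ 3 * k + 1)
    (h : IsSymmetric (semigroup q m) F) (ht : F < t + (q ^ 2 - 1) * m) :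
    ∃ z ∈ semigroup q m, t ≤ z ∧ z ≤ pairCount (semigroup q m) (F + t) := by
  classical
  by_cases htS : t ∈ semigroup q m
  · exact ⟨t, htS, le_rfl, h.le_pairCount_add t⟩
  have htF : t ≤ F := by
    by_contra!
    exact htS (h.mem_of_lt t this)
  obtain ⟨c, d, e, hde, hu⟩ := exists_rep_of_lt ((h.notMem_iff_sub_mem htF).1 htS) (by omega)
  refine ⟨t + (e + 1), ?_, by omega, ?_⟩
  · by_contra hS
    have hle : t + (e + 1) ≤ F := by
      by_contra!
      exact hS (h.mem_of_lt _ this)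
    exact sub_succ_notMem hq hm hde (c := c) (by omega) (by omega)
      ((h.notMem_iff_sub_mem hle).1 hS)
  · rw [h.pairCount_add]
    have hm0 : 0 < m := Nat.pos_of_ne_zero (by rintro rfl; simp at hm)
    have := succ_le_card_filter h hm0 (c := c) (d := d) (e := e) (t := t) (by omega)
    omega

variable {n g : ℕ}

lemma two_mul_genus_add (hq : 1 ≤ q) (hn : 1 ≤ n) (hm : m * (q + 1) = q ^ n + 1)
    (hg : 2 * g = (q - 1) * (q ^ (n + 1) + q ^ n - q ^ 2)) :
    2 * g + q ^ 3 = (q ^ 2 - 1) * (m * q) + (q - 1) * (m * (q + 1)) + 1 := by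
  have hqn : q ^ 2 ≤ q ^ (n + 1) := Nat.pow_le_pow_right hq (by omega)
  have hq2 : 1 ≤ q ^ 2 := Nat.one_le_pow _ _ hq
  zify [hq, hq2, hqn.trans (Nat.le_add_right _ (q ^ n))] at hm hg ⊢
  linear_combination hg - ((q : ℤ) - 1) * (q + 1) * hm

lemma sq_sub_one_mul_lt_two_mul_genus (hq : 2 ≤ q) (hn : 2 ≤ n) (hm : m * (q + 1) = q ^ n + 1)
    (hg : 2 * g = (q - 1) * (q ^ (n + 1) + q ^ n - q ^ 2)) :
    (q ^ 2 - 1) * m < 2 * g := by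
  have hqn : q ^ 2 * q ≤ q ^ (n + 1) := by
    rw [← pow_succ]; exact Nat.pow_le_pow_right (by omega) (by omega)
  have hqn' : q ^ 2 ≤ q ^ (n + 1) + q ^ n := by nlinarith
  have hq2 : 1 ≤ q ^ 2 := Nat.one_le_pow _ _ (by omega)
  zify [(by omega : 1 ≤ q), hq2, hqn'] at hm hg hqn ⊢
  have hqZ : (2 : ℤ) ≤ q := by exact_mod_cast hq
  have hlhs : ((q : ℤ) ^ 2 - 1) * m = (q - 1) * (q ^ n + 1) := by
    linear_combination ((q : ℤ) - 1) * hm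
  have hpos : (0 : ℤ) < (q - 1) * (q ^ (n + 1) - q ^ 2 - 1) := by
    apply mul_pos <;> nlinarith
  linear_combination hpos + hlhs - hg

lemma three_mul_genus_le (hq : 1 ≤ q) (hn : 1 ≤ n) (hm : m * (q + 1) = q ^ n + 1)
    (hg : 2 * g = (q - 1) * (q ^ (n + 1) + q ^ n - q ^ 2)) {ℓ : ℕ}
    (hℓ : (3 : ℚ) / 2 * ((q : ℚ) - 1)
        * ((q : ℚ) ^ (n + 1) + (q : ℚ) ^ n / 3 - (q : ℚ) ^ 2 - 2 / 3) - 2 < (ℓ : ℚ)) :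
    3 * g ≤ ℓ + 1 + (q ^ 2 - 1) * m := by
  have hqn : q ^ 2 ≤ q ^ (n + 1) := Nat.pow_le_pow_right hq (by omega)
  have hq2 : 1 ≤ q ^ 2 := Nat.one_le_pow _ _ hq
  qify [hq, hq2, hqn.trans (Nat.le_add_right _ (q ^ n))] at hm hg
  have : ((3 * g : ℕ) : ℚ) < ((ℓ + 2 + (q ^ 2 - 1) * m : ℕ) : ℚ) := by
    push_cast [Nat.cast_sub hq2]
    linear_combination hℓ + 3 / 2 * hg - ((q : ℚ) - 1) * hm
  have : 3 * g < ℓ + 2 + (q ^ 2 - 1) * m := by exact_mod_cast this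
  omega

end GGS

open NumericalSemigroup GGS in
theorem stmt_17_general (q n m g : ℕ) (hq2 : 2 ≤ q) (hn : 3 ≤ n)
    (hm : m * (q + 1) = q ^ n + 1)
    (hg : 2 * g = (q - 1) * (q ^ (n + 1) + q ^ n - q ^ 2))
    (S : AddSubmonoid ℕ)
    (hS : S = AddSubmonoid.closure {q ^ 3, m * q, q ^ n + 1})
    (ν : ℕ → ℕ)
    (hν : ∀ x, ν x = {p : ℕ × ℕ | p.1 ∈ S ∧ p.2 ∈ S ∧ p.1 + p.2 = x}.ncard)
    (ρ : ℕ → ℕ) (hρ : ∀ t : ℕ, ρ (t + 1) = Nat.nth (· ∈ S) t)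
    (ℓ : ℕ)
    (hl1 : (3 : ℚ) / 2 * ((q : ℚ) - 1)
        * ((q : ℚ) ^ (n + 1) + (q : ℚ) ^ n / 3 - (q : ℚ) ^ 2 - 2 / 3) - 2 < (ℓ : ℚ)) :
    sInf (ν '' {y : ℕ | y ∈ S ∧ ρ (ℓ + 1) ≤ y})
      = sInf {z : ℕ | z ∈ S ∧ ℓ + 1 - g ≤ z} := by
  rw [← hm] at hS
  obtain rfl : S = semigroup q m := hS
  obtain rfl : ν = pairCount (semigroup q m) := funext hν
  have hmk : m * (q + 1) = q ^ 3 * q ^ (n - 3) + 1 := by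
    rw [← pow_add, Nat.add_sub_cancel' hn, hm]
  have hF := two_mul_genus_add (by omega) (by omega) hm hg
  have hlt := sq_sub_one_mul_lt_two_mul_genus hq2 (by omega) hm hg
  have hle := three_mul_genus_le (by omega) (by omega) hm hg hl1
  have h := isSymmetric_semigroup (coprime_of_mul_succ_eq hmk) (by omega)
    (F := 2 * g - 1) (by omega)
  rw [hρ, h.nth_eq (g := g) (by omega) (by omega),
    show ℓ + g = 2 * g - 1 + (ℓ + 1 - g) by omega]
  refine h.sInf_pairCount_image (by omega) fun t ht => ?_
  obtain ⟨z, hz, htz, hzt⟩ := exists_mem_le_pairCount hq2 hmk h (t := t) (by omega)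
  exact ⟨z, hz, ht.trans htz, hzt⟩

/-- The order bound for large elements of the semigroup `S = ⟨q³, mq, qⁿ+1⟩`:
for `ℓ` in the stated range, `d_ORD(C_ℓ(P_∞)) = min{z ∈ S : z ≥ ℓ + 1 - g}`. -/
theorem stmt_17 (q n m g : ℕ) (hq : IsPrimePow q) (hq2 : 2 ≤ q) (hn : 3 ≤ n)
    (hodd : Odd n) (hm : m * (q + 1) = q ^ n + 1)
    (hg : 2 * g = (q - 1) * (q ^ (n + 1) + q ^ n - q ^ 2))
    (S : AddSubmonoid ℕ)
    (hS : S = AddSubmonoid.closure {q ^ 3, m * q, q ^ n + 1})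
    (ν : ℕ → ℕ)
    (hν : ∀ x, ν x = {p : ℕ × ℕ | p.1 ∈ S ∧ p.2 ∈ S ∧ p.1 + p.2 = x}.ncard)
    (ρ : ℕ → ℕ) (hρ : ∀ t : ℕ, ρ (t + 1) = Nat.nth (· ∈ S) t)
    (ℓ : ℕ)
    (hl1 : (3 : ℚ) / 2 * ((q : ℚ) - 1)
        * ((q : ℚ) ^ (n + 1) + (q : ℚ) ^ n / 3 - (q : ℚ) ^ 2 - 2 / 3) - 2 < (ℓ : ℚ))
    (hl2 : (ℓ : ℚ) ≤ (3 : ℚ) / 2 * ((q : ℚ) - 1)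
        * ((q : ℚ) ^ (n + 1) + (q : ℚ) ^ n - (q : ℚ) ^ 2) - 2) :
    sInf (ν '' {y : ℕ | y ∈ S ∧ ρ (ℓ + 1) ≤ y})
      = sInf {z : ℕ | z ∈ S ∧ ℓ + 1 - g ≤ z} :=
  stmt_17_general q n m g hq2 hn hm hg S hS ν hν ρ hρ ℓ hl1
end

section
/- Let n ≥ 5 be odd and m = (2^n+1)/3. Then 9m − 1, 9m, and 9m + 1 all belong to H, and min{ ν(y) : y ∈ H, y ≥ 9m + 1 } = 16. (Equivalently, for ρ_ℓ = 9m the Feng–Rao designed minimum distance of the code C_ℓ(P_∞) on GGS(2,n) equals 16.) -/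
set_option maxHeartbeats 4000000 in

/-- `9m - 1`, `9m`, `9m + 1` all lie in `H(P_∞)` on `GGS(2,n)`, and the Feng–Rao
designed minimum distance of the code `C_ℓ(P_∞)` with `ρ_ℓ = 9m` equals `16`. -/
theorem stmt_18 (n m : ℕ) (hn : 5 ≤ n) (hodd : Odd n) (hm : 3 * m = 2 ^ n + 1)
    (H : Set ℕ)
    (hH : H = {x | ∃ i ≤ 1, ∃ j ≤ 3, ∃ k : ℕ, x = i * (2 ^ n + 1) + 2 * j * m + 8 * k})
    (ν : ℕ → ℕ)
    (hν : ∀ x, ν x = {p : ℕ × ℕ | p.1 ∈ H ∧ p.2 ∈ H ∧ p.1 + p.2 = x}.ncard) :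
    (9 * m - 1) ∈ H ∧ (9 * m) ∈ H ∧ (9 * m + 1) ∈ H ∧
    sInf (ν '' {y : ℕ | y ∈ H ∧ 9 * m + 1 ≤ y}) = 16 := by
  -- arithmetic setup: m = 8u+3 with u ≥ 1
  obtain ⟨a, ha⟩ := hodd
  have ha2 : 2 ≤ a := by omega
  have hpow : 2 ^ n = 8 * 4 ^ (a - 1) := by
    have h1 : n = 2 * (a - 1) + 3 := by omega
    rw [h1, pow_add, pow_mul]; ring
  have hm3 : 3 * m = 8 * 4 ^ (a - 1) + 1 := by rw [hm, hpow]
  have hv1 : (4 ^ (a-1)) % 3 = 1 := by rw [Nat.pow_mod]; norm_num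
  have hv4 : 4 ≤ 4 ^ (a-1) := by
    calc (4:ℕ) = 4 ^ 1 := rfl
    _ ≤ 4 ^ (a-1) := Nat.pow_le_pow_right (by norm_num) (by omega)
  set v := 4 ^ (a-1) with hv
  have hu1 : m = 8 * (v/3) + 3 := by omega
  have hu2 : 1 ≤ v/3 := by omega
  set u := v/3 with hu
  clear hv1 hv4 hm3 hpow hv hu ha ha2 hn
  -- membership helper
  have memH : ∀ c k : ℕ,
      (c = 0 ∨ c = 2 ∨ c = 3 ∨ c = 4 ∨ c = 5 ∨ c = 6 ∨ c = 7 ∨ c = 9) →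
      c * m + 8 * k ∈ H := by
    intro c k hc
    rw [hH]
    simp only [Set.mem_setOf_eq]
    rw [show (2:ℕ)^n + 1 = 3*m from hm.symm]
    rcases hc with rfl | rfl | rfl | rfl | rfl | rfl | rfl | rfl
    · exact ⟨0, by norm_num, 0, by norm_num, k, by ring⟩
    · exact ⟨0, by norm_num, 1, by norm_num, k, by ring⟩
    · exact ⟨1, by norm_num, 0, by norm_num, k, by ring⟩
    · exact ⟨0, by norm_num, 2, by norm_num, k, by ring⟩
    · exact ⟨1, by norm_num, 1, by norm_num, k, by ring⟩
    · exact ⟨0, by norm_num, 3, by norm_num, k, by ring⟩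
    · exact ⟨1, by norm_num, 2, by norm_num, k, by ring⟩
    · exact ⟨1, by norm_num, 3, by norm_num, k, by ring⟩
  -- finiteness of the pair sets
  have hAfin : ∀ y : ℕ, {p : ℕ × ℕ | p.1 ∈ H ∧ p.2 ∈ H ∧ p.1 + p.2 = y}.Finite := by
    intro y
    apply Set.Finite.subset ((Set.finite_Iic y).prod (Set.finite_Iic y))
    rintro ⟨p1, p2⟩ ⟨-, -, hs⟩
    exact ⟨by simp only [Set.mem_Iic]; omega, by simp only [Set.mem_Iic]; omega⟩
  -- a generic lower-bound lemma
  have key : ∀ (y : ℕ) (L : List (ℕ × ℕ)), L.length = 16 → (L.map Prod.fst).Nodup →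
      (∀ p ∈ L, p.1 ∈ H ∧ p.2 ∈ H ∧ p.1 + p.2 = y) → 16 ≤ ν y := by
    intro y L hlen hnd hmem
    rw [hν]
    have hnd' : L.Nodup := hnd.of_map
    have hsub : ↑L.toFinset ⊆ {p : ℕ × ℕ | p.1 ∈ H ∧ p.2 ∈ H ∧ p.1 + p.2 = y} := by
      intro p hp
      exact hmem p (List.mem_toFinset.mp hp)
    calc (16:ℕ) = L.toFinset.card := by rw [List.toFinset_card_of_nodup hnd', hlen]
      _ = (↑L.toFinset : Set (ℕ×ℕ)).ncard := (Set.ncard_coe_finset _).symm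
      _ ≤ _ := Set.ncard_le_ncard hsub (hAfin y)
  -- lower bound for every y ∈ H with y ≥ 9m+1
  have main : ∀ y, y ∈ H → 9*m+1 ≤ y → 16 ≤ ν y := by
    intro y hy hge
    rw [hH] at hy
    obtain ⟨i, hi, j, hj, k, hyk⟩ := hy
    rw [show (2:ℕ)^n + 1 = 3*m from hm.symm] at hyk
    interval_cases i <;> interval_cases j
    · refine key y
          [(0*m+8*0, 0*m+8*(k-0)),
          (0*m+8*1, 0*m+8*(k-1)),
          (0*m+8*2, 0*m+8*(k-2)),
          (0*m+8*3, 0*m+8*(k-3)),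
          (0*m+8*4, 0*m+8*(k-4)),
          (0*m+8*5, 0*m+8*(k-5)),
          (0*m+8*6, 0*m+8*(k-6)),
          (0*m+8*7, 0*m+8*(k-7)),
          (0*m+8*8, 0*m+8*(k-8)),
          (0*m+8*9, 0*m+8*(k-9)),
          (0*m+8*10, 0*m+8*(k-10)),
          (0*m+8*11, 0*m+8*(k-11)),
          (0*m+8*12, 0*m+8*(k-12)),
          (0*m+8*13, 0*m+8*(k-13)),
          (2*m+8*0, 6*m+8*(k-m)),
          (2*m+8*1, 6*m+8*(k-(m+1)))] rfl ?_ ?_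
      · simp only [List.map_cons, List.map_nil, List.nodup_cons, List.mem_cons,
          List.not_mem_nil, or_false, List.nodup_nil, and_true, not_false_eq_true]
        omega
      · intro p hp
        fin_cases hp <;>
          exact ⟨memH _ _ (by norm_num), memH _ _ (by norm_num), by omega⟩
    · refine key y
          [(0*m+8*0, 2*m+8*(k-0)),
          (0*m+8*1, 2*m+8*(k-1)),
          (0*m+8*2, 2*m+8*(k-2)),
          (0*m+8*3, 2*m+8*(k-3)),
          (0*m+8*4, 2*m+8*(k-4)),
          (0*m+8*5, 2*m+8*(k-5)),
          (0*m+8*6, 2*m+8*(k-6)),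
          (0*m+8*7, 2*m+8*(k-7)),
          (2*m+8*0, 0*m+8*(k-0)),
          (2*m+8*1, 0*m+8*(k-1)),
          (2*m+8*2, 0*m+8*(k-2)),
          (2*m+8*3, 0*m+8*(k-3)),
          (2*m+8*4, 0*m+8*(k-4)),
          (2*m+8*5, 0*m+8*(k-5)),
          (2*m+8*6, 0*m+8*(k-6)),
          (2*m+8*7, 0*m+8*(k-7))] rfl ?_ ?_
      · simp only [List.map_cons, List.map_nil, List.nodup_cons, List.mem_cons,
          List.not_mem_nil, or_false, List.nodup_nil, and_true, not_false_eq_true]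
        omega
      · intro p hp
        fin_cases hp <;>
          exact ⟨memH _ _ (by norm_num), memH _ _ (by norm_num), by omega⟩
    · refine key y
          [(0*m+8*0, 4*m+8*(k-0)),
          (0*m+8*1, 4*m+8*(k-1)),
          (0*m+8*2, 4*m+8*(k-2)),
          (0*m+8*3, 4*m+8*(k-3)),
          (0*m+8*4, 4*m+8*(k-4)),
          (0*m+8*5, 4*m+8*(k-5)),
          (0*m+8*6, 4*m+8*(k-6)),
          (0*m+8*7, 4*m+8*(k-7)),
          (4*m+8*0, 0*m+8*(k-0)),
          (4*m+8*1, 0*m+8*(k-1)),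
          (4*m+8*2, 0*m+8*(k-2)),
          (4*m+8*3, 0*m+8*(k-3)),
          (4*m+8*4, 0*m+8*(k-4)),
          (4*m+8*5, 0*m+8*(k-5)),
          (4*m+8*6, 0*m+8*(k-6)),
          (4*m+8*7, 0*m+8*(k-7))] rfl ?_ ?_
      · simp only [List.map_cons, List.map_nil, List.nodup_cons, List.mem_cons,
          List.not_mem_nil, or_false, List.nodup_nil, and_true, not_false_eq_true]
        omega
      · intro p hp
        fin_cases hp <;>
          exact ⟨memH _ _ (by norm_num), memH _ _ (by norm_num), by omega⟩
    · refine key y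
          [(0*m+8*0, 6*m+8*(k-0)),
          (0*m+8*1, 6*m+8*(k-1)),
          (0*m+8*2, 6*m+8*(k-2)),
          (0*m+8*3, 6*m+8*(k-3)),
          (6*m+8*0, 0*m+8*(k-0)),
          (6*m+8*1, 0*m+8*(k-1)),
          (6*m+8*2, 0*m+8*(k-2)),
          (6*m+8*3, 0*m+8*(k-3)),
          (2*m+8*0, 4*m+8*(k-0)),
          (2*m+8*1, 4*m+8*(k-1)),
          (2*m+8*2, 4*m+8*(k-2)),
          (2*m+8*3, 4*m+8*(k-3)),
          (4*m+8*0, 2*m+8*(k-0)),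
          (4*m+8*1, 2*m+8*(k-1)),
          (4*m+8*2, 2*m+8*(k-2)),
          (4*m+8*3, 2*m+8*(k-3))] rfl ?_ ?_
      · simp only [List.map_cons, List.map_nil, List.nodup_cons, List.mem_cons,
          List.not_mem_nil, or_false, List.nodup_nil, and_true, not_false_eq_true]
        omega
      · intro p hp
        fin_cases hp <;>
          exact ⟨memH _ _ (by norm_num), memH _ _ (by norm_num), by omega⟩
    · refine key y
          [(0*m+8*0, 3*m+8*(k-0)),
          (0*m+8*1, 3*m+8*(k-1)),
          (0*m+8*2, 3*m+8*(k-2)),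
          (0*m+8*3, 3*m+8*(k-3)),
          (0*m+8*4, 3*m+8*(k-4)),
          (0*m+8*5, 3*m+8*(k-5)),
          (0*m+8*6, 3*m+8*(k-6)),
          (0*m+8*7, 3*m+8*(k-7)),
          (3*m+8*0, 0*m+8*(k-0)),
          (3*m+8*1, 0*m+8*(k-1)),
          (3*m+8*2, 0*m+8*(k-2)),
          (3*m+8*3, 0*m+8*(k-3)),
          (3*m+8*4, 0*m+8*(k-4)),
          (3*m+8*5, 0*m+8*(k-5)),
          (3*m+8*6, 0*m+8*(k-6)),
          (3*m+8*7, 0*m+8*(k-7))] rfl ?_ ?_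
      · simp only [List.map_cons, List.map_nil, List.nodup_cons, List.mem_cons,
          List.not_mem_nil, or_false, List.nodup_nil, and_true, not_false_eq_true]
        omega
      · intro p hp
        fin_cases hp <;>
          exact ⟨memH _ _ (by norm_num), memH _ _ (by norm_num), by omega⟩
    · refine key y
          [(0*m+8*0, 5*m+8*(k-0)),
          (0*m+8*1, 5*m+8*(k-1)),
          (0*m+8*2, 5*m+8*(k-2)),
          (0*m+8*3, 5*m+8*(k-3)),
          (5*m+8*0, 0*m+8*(k-0)),
          (5*m+8*1, 0*m+8*(k-1)),
          (5*m+8*2, 0*m+8*(k-2)),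
          (5*m+8*3, 0*m+8*(k-3)),
          (2*m+8*0, 3*m+8*(k-0)),
          (2*m+8*1, 3*m+8*(k-1)),
          (2*m+8*2, 3*m+8*(k-2)),
          (2*m+8*3, 3*m+8*(k-3)),
          (3*m+8*0, 2*m+8*(k-0)),
          (3*m+8*1, 2*m+8*(k-1)),
          (3*m+8*2, 2*m+8*(k-2)),
          (3*m+8*3, 2*m+8*(k-3))] rfl ?_ ?_
      · simp only [List.map_cons, List.map_nil, List.nodup_cons, List.mem_cons,
          List.not_mem_nil, or_false, List.nodup_nil, and_true, not_false_eq_true]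
        omega
      · intro p hp
        fin_cases hp <;>
          exact ⟨memH _ _ (by norm_num), memH _ _ (by norm_num), by omega⟩
    · refine key y
          [(0*m+8*0, 7*m+8*(k-0)),
          (0*m+8*1, 7*m+8*(k-1)),
          (0*m+8*2, 7*m+8*(k-2)),
          (0*m+8*3, 7*m+8*(k-3)),
          (7*m+8*0, 0*m+8*(k-0)),
          (7*m+8*1, 0*m+8*(k-1)),
          (7*m+8*2, 0*m+8*(k-2)),
          (7*m+8*3, 0*m+8*(k-3)),
          (2*m+8*0, 5*m+8*(k-0)),
          (2*m+8*1, 5*m+8*(k-1)),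
          (2*m+8*2, 5*m+8*(k-2)),
          (2*m+8*3, 5*m+8*(k-3)),
          (5*m+8*0, 2*m+8*(k-0)),
          (5*m+8*1, 2*m+8*(k-1)),
          (5*m+8*2, 2*m+8*(k-2)),
          (5*m+8*3, 2*m+8*(k-3))] rfl ?_ ?_
      · simp only [List.map_cons, List.map_nil, List.nodup_cons, List.mem_cons,
          List.not_mem_nil, or_false, List.nodup_nil, and_true, not_false_eq_true]
        omega
      · intro p hp
        fin_cases hp <;>
          exact ⟨memH _ _ (by norm_num), memH _ _ (by norm_num), by omega⟩
    · refine key y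
          [(0*m+8*0, 9*m+8*(k-0)),
          (0*m+8*1, 9*m+8*(k-1)),
          (9*m+8*0, 0*m+8*(k-0)),
          (9*m+8*1, 0*m+8*(k-1)),
          (2*m+8*0, 7*m+8*(k-0)),
          (2*m+8*1, 7*m+8*(k-1)),
          (7*m+8*0, 2*m+8*(k-0)),
          (7*m+8*1, 2*m+8*(k-1)),
          (3*m+8*0, 6*m+8*(k-0)),
          (3*m+8*1, 6*m+8*(k-1)),
          (6*m+8*0, 3*m+8*(k-0)),
          (6*m+8*1, 3*m+8*(k-1)),
          (4*m+8*0, 5*m+8*(k-0)),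
          (4*m+8*1, 5*m+8*(k-1)),
          (5*m+8*0, 4*m+8*(k-0)),
          (5*m+8*1, 4*m+8*(k-1))] rfl ?_ ?_
      · simp only [List.map_cons, List.map_nil, List.nodup_cons, List.mem_cons,
          List.not_mem_nil, or_false, List.nodup_nil, and_true, not_false_eq_true]
        omega
      · intro p hp
        fin_cases hp <;>
          exact ⟨memH _ _ (by norm_num), memH _ _ (by norm_num), by omega⟩
  -- exact value at 9m+8
  have hlow : 16 ≤ ν (9*m+8) := by
    refine key (9*m+8)
        [(0*m+8*0, 9*m+8*1),
        (0*m+8*1, 9*m+8*0),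
        (9*m+8*0, 0*m+8*1),
        (9*m+8*1, 0*m+8*0),
        (2*m+8*0, 7*m+8*1),
        (2*m+8*1, 7*m+8*0),
        (7*m+8*0, 2*m+8*1),
        (7*m+8*1, 2*m+8*0),
        (3*m+8*0, 6*m+8*1),
        (3*m+8*1, 6*m+8*0),
        (6*m+8*0, 3*m+8*1),
        (6*m+8*1, 3*m+8*0),
        (4*m+8*0, 5*m+8*1),
        (4*m+8*1, 5*m+8*0),
        (5*m+8*0, 4*m+8*1),
        (5*m+8*1, 4*m+8*0)] rfl ?_ ?_
    · simp only [List.map_cons, List.map_nil, List.nodup_cons, List.mem_cons,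
        List.not_mem_nil, or_false, List.nodup_nil, and_true, not_false_eq_true]
      omega
    · intro p hp
      fin_cases hp <;>
        exact ⟨memH _ _ (by norm_num), memH _ _ (by norm_num), by omega⟩
  have hup : ν (9*m+8) ≤ 16 := by
    rw [hν]
    have hBfin : ({(0*m+8*0, 9*m+8*1), (0*m+8*1, 9*m+8*0), (9*m+8*0, 0*m+8*1), (9*m+8*1, 0*m+8*0), (2*m+8*0, 7*m+8*1), (2*m+8*1, 7*m+8*0), (7*m+8*0, 2*m+8*1), (7*m+8*1, 2*m+8*0), (3*m+8*0, 6*m+8*1), (3*m+8*1, 6*m+8*0), (6*m+8*0, 3*m+8*1), (6*m+8*1, 3*m+8*0), (4*m+8*0, 5*m+8*1), (4*m+8*1, 5*m+8*0), (5*m+8*0, 4*m+8*1), (5*m+8*1, 4*m+8*0)} : Set (ℕ×ℕ)).Finite := by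
      repeat first | exact Set.finite_singleton _ | apply Set.Finite.insert
    have hsub : {p : ℕ × ℕ | p.1 ∈ H ∧ p.2 ∈ H ∧ p.1 + p.2 = 9*m+8} ⊆
        ({(0*m+8*0, 9*m+8*1), (0*m+8*1, 9*m+8*0), (9*m+8*0, 0*m+8*1), (9*m+8*1, 0*m+8*0), (2*m+8*0, 7*m+8*1), (2*m+8*1, 7*m+8*0), (7*m+8*0, 2*m+8*1), (7*m+8*1, 2*m+8*0), (3*m+8*0, 6*m+8*1), (3*m+8*1, 6*m+8*0), (6*m+8*0, 3*m+8*1), (6*m+8*1, 3*m+8*0), (4*m+8*0, 5*m+8*1), (4*m+8*1, 5*m+8*0), (5*m+8*0, 4*m+8*1), (5*m+8*1, 4*m+8*0)} : Set (ℕ×ℕ)) := by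
      rintro ⟨x, z⟩ ⟨hx, hz, hs⟩
      rw [hH] at hx hz
      obtain ⟨i1, hi1, j1, hj1, k1, he1⟩ := hx
      obtain ⟨i2, hi2, j2, hj2, k2, he2⟩ := hz
      rw [show (2:ℕ)^n + 1 = 3*m from hm.symm] at he1 he2
      simp only [Set.mem_insert_iff, Set.mem_singleton_iff, Prod.mk.injEq]
      have hi1' : i1 = 0 ∨ i1 = 1 := by omega
      have hi2' : i2 = 0 ∨ i2 = 1 := by omega
      have hj1' : j1 = 0 ∨ j1 = 1 ∨ j1 = 2 ∨ j1 = 3 := by omega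
      have hj2' : j2 = 0 ∨ j2 = 1 ∨ j2 = 2 ∨ j2 = 3 := by omega
      rcases hi1' with rfl|rfl <;> rcases hj1' with rfl|rfl|rfl|rfl <;>
        rcases hi2' with rfl|rfl <;> rcases hj2' with rfl|rfl|rfl|rfl
      · exfalso; omega
      · exfalso; omega
      · exfalso; omega
      · exfalso; omega
      · exfalso; omega
      · exfalso; omega
      · exfalso; omega
      · rcases (show k1 = 0 ∧ k2 = 1 ∨ k1 = 1 ∧ k2 = 0 from by omega) with ⟨rfl,rfl⟩|⟨rfl,rfl⟩
        · exact Or.inl ⟨by omega, by omega⟩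
        · exact Or.inr (Or.inl ⟨by omega, by omega⟩)
      · exfalso; omega
      · exfalso; omega
      · exfalso; omega
      · exfalso; omega
      · exfalso; omega
      · exfalso; omega
      · rcases (show k1 = 0 ∧ k2 = 1 ∨ k1 = 1 ∧ k2 = 0 from by omega) with ⟨rfl,rfl⟩|⟨rfl,rfl⟩
        · exact Or.inr (Or.inr (Or.inr (Or.inr (Or.inl ⟨by omega, by omega⟩))))
        · exact Or.inr (Or.inr (Or.inr (Or.inr (Or.inr (Or.inl ⟨by omega, by omega⟩)))))
      · exfalso; omega
      · exfalso; omega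
      · exfalso; omega
      · exfalso; omega
      · exfalso; omega
      · exfalso; omega
      · rcases (show k1 = 0 ∧ k2 = 1 ∨ k1 = 1 ∧ k2 = 0 from by omega) with ⟨rfl,rfl⟩|⟨rfl,rfl⟩
        · exact Or.inr (Or.inr (Or.inr (Or.inr (Or.inr (Or.inr (Or.inr (Or.inr (Or.inr (Or.inr (Or.inr (Or.inr (Or.inl ⟨by omega, by omega⟩))))))))))))
        · exact Or.inr (Or.inr (Or.inr (Or.inr (Or.inr (Or.inr (Or.inr (Or.inr (Or.inr (Or.inr (Or.inr (Or.inr (Or.inr (Or.inl ⟨by omega, by omega⟩)))))))))))))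
      · exfalso; omega
      · exfalso; omega
      · exfalso; omega
      · exfalso; omega
      · exfalso; omega
      · exfalso; omega
      · rcases (show k1 = 0 ∧ k2 = 1 ∨ k1 = 1 ∧ k2 = 0 from by omega) with ⟨rfl,rfl⟩|⟨rfl,rfl⟩
        · exact Or.inr (Or.inr (Or.inr (Or.inr (Or.inr (Or.inr (Or.inr (Or.inr (Or.inr (Or.inr (Or.inl ⟨by omega, by omega⟩))))))))))
        · exact Or.inr (Or.inr (Or.inr (Or.inr (Or.inr (Or.inr (Or.inr (Or.inr (Or.inr (Or.inr (Or.inr (Or.inl ⟨by omega, by omega⟩)))))))))))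
      · exfalso; omega
      · exfalso; omega
      · exfalso; omega
      · exfalso; omega
      · exfalso; omega
      · exfalso; omega
      · rcases (show k1 = 0 ∧ k2 = 1 ∨ k1 = 1 ∧ k2 = 0 from by omega) with ⟨rfl,rfl⟩|⟨rfl,rfl⟩
        · exact Or.inr (Or.inr (Or.inr (Or.inr (Or.inr (Or.inr (Or.inr (Or.inr (Or.inl ⟨by omega, by omega⟩))))))))
        · exact Or.inr (Or.inr (Or.inr (Or.inr (Or.inr (Or.inr (Or.inr (Or.inr (Or.inr (Or.inl ⟨by omega, by omega⟩)))))))))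
      · exfalso; omega
      · exfalso; omega
      · exfalso; omega
      · exfalso; omega
      · exfalso; omega
      · exfalso; omega
      · rcases (show k1 = 0 ∧ k2 = 1 ∨ k1 = 1 ∧ k2 = 0 from by omega) with ⟨rfl,rfl⟩|⟨rfl,rfl⟩
        · exact Or.inr (Or.inr (Or.inr (Or.inr (Or.inr (Or.inr (Or.inr (Or.inr (Or.inr (Or.inr (Or.inr (Or.inr (Or.inr (Or.inr (Or.inl ⟨by omega, by omega⟩))))))))))))))
        · exact Or.inr (Or.inr (Or.inr (Or.inr (Or.inr (Or.inr (Or.inr (Or.inr (Or.inr (Or.inr (Or.inr (Or.inr (Or.inr (Or.inr (Or.inr (⟨by omega, by omega⟩)))))))))))))))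
      · exfalso; omega
      · exfalso; omega
      · exfalso; omega
      · exfalso; omega
      · exfalso; omega
      · exfalso; omega
      · rcases (show k1 = 0 ∧ k2 = 1 ∨ k1 = 1 ∧ k2 = 0 from by omega) with ⟨rfl,rfl⟩|⟨rfl,rfl⟩
        · exact Or.inr (Or.inr (Or.inr (Or.inr (Or.inr (Or.inr (Or.inl ⟨by omega, by omega⟩))))))
        · exact Or.inr (Or.inr (Or.inr (Or.inr (Or.inr (Or.inr (Or.inr (Or.inl ⟨by omega, by omega⟩)))))))
      · exfalso; omega
      · exfalso; omega
      · exfalso; omega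
      · exfalso; omega
      · exfalso; omega
      · exfalso; omega
      · rcases (show k1 = 0 ∧ k2 = 1 ∨ k1 = 1 ∧ k2 = 0 from by omega) with ⟨rfl,rfl⟩|⟨rfl,rfl⟩
        · exact Or.inr (Or.inr (Or.inl ⟨by omega, by omega⟩))
        · exact Or.inr (Or.inr (Or.inr (Or.inl ⟨by omega, by omega⟩)))
      · exfalso; omega
      · exfalso; omega
      · exfalso; omega
      · exfalso; omega
      · exfalso; omega
      · exfalso; omega
      · exfalso; omega
    have hle := Set.ncard_le_ncard hsub hBfin
    have h16 : ({(0*m+8*0, 9*m+8*1), (0*m+8*1, 9*m+8*0), (9*m+8*0, 0*m+8*1), (9*m+8*1, 0*m+8*0), (2*m+8*0, 7*m+8*1), (2*m+8*1, 7*m+8*0), (7*m+8*0, 2*m+8*1), (7*m+8*1, 2*m+8*0), (3*m+8*0, 6*m+8*1), (3*m+8*1, 6*m+8*0), (6*m+8*0, 3*m+8*1), (6*m+8*1, 3*m+8*0), (4*m+8*0, 5*m+8*1), (4*m+8*1, 5*m+8*0), (5*m+8*0, 4*m+8*1), (5*m+8*1, 4*m+8*0)} : Set (ℕ×ℕ)).ncard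 ≤ 16 := by
      have hc1 := Set.ncard_insert_le (0*m+8*0, 9*m+8*1) ({(0*m+8*1, 9*m+8*0), (9*m+8*0, 0*m+8*1), (9*m+8*1, 0*m+8*0), (2*m+8*0, 7*m+8*1), (2*m+8*1, 7*m+8*0), (7*m+8*0, 2*m+8*1), (7*m+8*1, 2*m+8*0), (3*m+8*0, 6*m+8*1), (3*m+8*1, 6*m+8*0), (6*m+8*0, 3*m+8*1), (6*m+8*1, 3*m+8*0), (4*m+8*0, 5*m+8*1), (4*m+8*1, 5*m+8*0), (5*m+8*0, 4*m+8*1), (5*m+8*1, 4*m+8*0)} : Set (ℕ×ℕ))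
      have hc2 := Set.ncard_insert_le (0*m+8*1, 9*m+8*0) ({(9*m+8*0, 0*m+8*1), (9*m+8*1, 0*m+8*0), (2*m+8*0, 7*m+8*1), (2*m+8*1, 7*m+8*0), (7*m+8*0, 2*m+8*1), (7*m+8*1, 2*m+8*0), (3*m+8*0, 6*m+8*1), (3*m+8*1, 6*m+8*0), (6*m+8*0, 3*m+8*1), (6*m+8*1, 3*m+8*0), (4*m+8*0, 5*m+8*1), (4*m+8*1, 5*m+8*0), (5*m+8*0, 4*m+8*1), (5*m+8*1, 4*m+8*0)} : Set (ℕ×ℕ))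
      have hc3 := Set.ncard_insert_le (9*m+8*0, 0*m+8*1) ({(9*m+8*1, 0*m+8*0), (2*m+8*0, 7*m+8*1), (2*m+8*1, 7*m+8*0), (7*m+8*0, 2*m+8*1), (7*m+8*1, 2*m+8*0), (3*m+8*0, 6*m+8*1), (3*m+8*1, 6*m+8*0), (6*m+8*0, 3*m+8*1), (6*m+8*1, 3*m+8*0), (4*m+8*0, 5*m+8*1), (4*m+8*1, 5*m+8*0), (5*m+8*0, 4*m+8*1), (5*m+8*1, 4*m+8*0)} : Set (ℕ×ℕ))
      have hc4 := Set.ncard_insert_le (9*m+8*1, 0*m+8*0) ({(2*m+8*0, 7*m+8*1), (2*m+8*1, 7*m+8*0), (7*m+8*0, 2*m+8*1), (7*m+8*1, 2*m+8*0), (3*m+8*0, 6*m+8*1), (3*m+8*1, 6*m+8*0), (6*m+8*0, 3*m+8*1), (6*m+8*1, 3*m+8*0), (4*m+8*0, 5*m+8*1), (4*m+8*1, 5*m+8*0), (5*m+8*0, 4*m+8*1), (5*m+8*1, 4*m+8*0)} : Set (ℕ×ℕ))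
      have hc5 := Set.ncard_insert_le (2*m+8*0, 7*m+8*1) ({(2*m+8*1, 7*m+8*0), (7*m+8*0, 2*m+8*1), (7*m+8*1, 2*m+8*0), (3*m+8*0, 6*m+8*1), (3*m+8*1, 6*m+8*0), (6*m+8*0, 3*m+8*1), (6*m+8*1, 3*m+8*0), (4*m+8*0, 5*m+8*1), (4*m+8*1, 5*m+8*0), (5*m+8*0, 4*m+8*1), (5*m+8*1, 4*m+8*0)} : Set (ℕ×ℕ))
      have hc6 := Set.ncard_insert_le (2*m+8*1, 7*m+8*0) ({(7*m+8*0, 2*m+8*1), (7*m+8*1, 2*m+8*0), (3*m+8*0, 6*m+8*1), (3*m+8*1, 6*m+8*0), (6*m+8*0, 3*m+8*1), (6*m+8*1, 3*m+8*0), (4*m+8*0, 5*m+8*1), (4*m+8*1, 5*m+8*0), (5*m+8*0, 4*m+8*1), (5*m+8*1, 4*m+8*0)} : Set (ℕ×ℕ))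
      have hc7 := Set.ncard_insert_le (7*m+8*0, 2*m+8*1) ({(7*m+8*1, 2*m+8*0), (3*m+8*0, 6*m+8*1), (3*m+8*1, 6*m+8*0), (6*m+8*0, 3*m+8*1), (6*m+8*1, 3*m+8*0), (4*m+8*0, 5*m+8*1), (4*m+8*1, 5*m+8*0), (5*m+8*0, 4*m+8*1), (5*m+8*1, 4*m+8*0)} : Set (ℕ×ℕ))
      have hc8 := Set.ncard_insert_le (7*m+8*1, 2*m+8*0) ({(3*m+8*0, 6*m+8*1), (3*m+8*1, 6*m+8*0), (6*m+8*0, 3*m+8*1), (6*m+8*1, 3*m+8*0), (4*m+8*0, 5*m+8*1), (4*m+8*1, 5*m+8*0), (5*m+8*0, 4*m+8*1), (5*m+8*1, 4*m+8*0)} : Set (ℕ×ℕ))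
      have hc9 := Set.ncard_insert_le (3*m+8*0, 6*m+8*1) ({(3*m+8*1, 6*m+8*0), (6*m+8*0, 3*m+8*1), (6*m+8*1, 3*m+8*0), (4*m+8*0, 5*m+8*1), (4*m+8*1, 5*m+8*0), (5*m+8*0, 4*m+8*1), (5*m+8*1, 4*m+8*0)} : Set (ℕ×ℕ))
      have hc10 := Set.ncard_insert_le (3*m+8*1, 6*m+8*0) ({(6*m+8*0, 3*m+8*1), (6*m+8*1, 3*m+8*0), (4*m+8*0, 5*m+8*1), (4*m+8*1, 5*m+8*0), (5*m+8*0, 4*m+8*1), (5*m+8*1, 4*m+8*0)} : Set (ℕ×ℕ))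
      have hc11 := Set.ncard_insert_le (6*m+8*0, 3*m+8*1) ({(6*m+8*1, 3*m+8*0), (4*m+8*0, 5*m+8*1), (4*m+8*1, 5*m+8*0), (5*m+8*0, 4*m+8*1), (5*m+8*1, 4*m+8*0)} : Set (ℕ×ℕ))
      have hc12 := Set.ncard_insert_le (6*m+8*1, 3*m+8*0) ({(4*m+8*0, 5*m+8*1), (4*m+8*1, 5*m+8*0), (5*m+8*0, 4*m+8*1), (5*m+8*1, 4*m+8*0)} : Set (ℕ×ℕ))
      have hc13 := Set.ncard_insert_le (4*m+8*0, 5*m+8*1) ({(4*m+8*1, 5*m+8*0), (5*m+8*0, 4*m+8*1), (5*m+8*1, 4*m+8*0)} : Set (ℕ×ℕ))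
      have hc14 := Set.ncard_insert_le (4*m+8*1, 5*m+8*0) ({(5*m+8*0, 4*m+8*1), (5*m+8*1, 4*m+8*0)} : Set (ℕ×ℕ))
      have hc15 := Set.ncard_insert_le (5*m+8*0, 4*m+8*1) ({(5*m+8*1, 4*m+8*0)} : Set (ℕ×ℕ))
      have hc16 := Set.ncard_singleton (5*m+8*1, 4*m+8*0)
      omega
    omega
  have hexact : ν (9*m+8) = 16 := le_antisymm hup hlow
  refine ⟨?_, ?_, ?_, ?_⟩
  · have h9 : 9*m-1 = 6*m+8*(3*u+1) := by omega
    rw [h9]; exact memH 6 _ (by norm_num)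
  · have h9 : 9*m = 9*m+8*0 := by ring
    rw [h9]; exact memH 9 0 (by norm_num)
  · have h9 : 9*m+1 = 4*m+8*(5*u+2) := by omega
    rw [h9]; exact memH 4 _ (by norm_num)
  · have hmem16 : (16:ℕ) ∈ ν '' {y : ℕ | y ∈ H ∧ 9*m+1 ≤ y} := by
      refine ⟨9*m+8, ⟨?_, by omega⟩, hexact⟩
      have h9 : 9*m+8 = 9*m+8*1 := by ring
      rw [h9]; exact memH 9 1 (by norm_num)
    refine le_antisymm (Nat.sInf_le hmem16) (le_csInf ⟨16, hmem16⟩ ?_)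
    rintro b ⟨y, ⟨hy, hgey⟩, rfl⟩
    exact main y hy hgey
end
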